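/- For parameters α, β, γ, δ ∈ ℂ, let S_{α,β,γ,δ} : (ℂ³)⁴ → (ℂ³)⁴ be the NLS type parametric 4-simplex map with components (u₁,u₂,u₃,v₁,v₂,v₃,w₁,w₂,w₃,r₁,r₂,r₃), where u₃ = x₃, v₂ = (x₁y₂ + z₂)x₂ + αy₂/x₃, v₃ = y₃, w₂ = x₁y₂ + z₂, w₃ = z₃, r₁ = t₁y₃/x₃, r₂ = t₂x₃/y₃, r₃ = t₃, and u₁, u₂, v₁, w₁ are the rational expressions u₁ = (βx₁ − y₁y₃z₂)z₃/(γy₃), u₂ = [αγ(γx₂x₃ + (z₂ + x₁y₂)x₂x₃z₁z₃ + αy₂z₁z₃)/(αβγ − (x₂x₃(x₁y₂ + z₂) + αy₂)(z₁z₃(βx₁ − y₁y₃z₂) − γy₁y₃))]·(y₃/(x₃z₃)), v₁ = x₃(γy₁y₃ + (y₁y₃z₂ − βx₁)z₁z₃)/(αγy₃), w₁ = [(x₂x₃y₁y₃(γ + z₁z₂z₃) − βz₁z₃(α + x₁x₂x₃))/((x₂x₃(x₁y₂ + z₂) + αy₂)(z₁z₃(βx₁ − y₁y₃z₂) − γy₁y₃)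 − αβγ)]·(γ/z₃). Then at every point where all denominators are nonzero the following hold: (u₁u₂ + α/u₃)(v₁v₂ + β/v₃) = (x₁x₂ + α/x₃)(y₁y₂ + β/y₃), (v₁v₂ + β/v₃)(w₁w₂ + γ/w₃) = (y₁y₂ + β/y₃)(z₁z₂ + γ/z₃), u₃ = x₃, v₃ = y₃, w₃ = z₃ and r₁r₂ = t₁t₂; that is, I₁ = (x₁x₂ + α/x₃)(y₁y₂ + β/y₃), I₂ = (y₁y₂ + β/y₃)(z₁z₂ + γ/z₃), I₃ = x₃, I₄ = y₃, I₅ = z₃ and I₆ = t₁t₂ are invariants of S_{α,β,γ,δ}. Moreover S_{α,β,γ,δ} is noninvolutive: the tenth component of S_{α,β,γ,δ}∘S_{α,β,γ,δ} equals t₁y₃²/x₃², so there exists a point p (with all denominators nonzero) such that S_{α,β,γ,δ}(S_{α,β,γ,δ}(p)) ≠ p. -/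

import Mathlib

noncomputable section

namespace Paper4Simplex

variable {X : Type*}

/-- Quadruples over `X`. -/
abbrev Q (X : Type*) : Type _ := X × X × X × X

/-- 10-tuples over `X`. -/
abbrev P (X : Type*) : Type _ := X × X × X × X × X × X × X × X × X × X

/-- `S` acting on coordinates 1,2,3,4 of a 10-tuple. -/
def app1234 (S : Q X → Q X) : P X → P X := fun p =>
  match p with
  | (a,b,c,d,e,f,g,h,i,j) =>
    match S (a,b,c,d) with
    | (A,B,C,D) => (A,B,C,D,e,f,g,h,i,j)

/-- `S` acting on coordinates 1,5,6,7 of a 10-tuple. -/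
def app1567 (S : Q X → Q X) : P X → P X := fun p =>
  match p with
  | (a,b,c,d,e,f,g,h,i,j) =>
    match S (a,e,f,g) with
    | (A,E,F,G) => (A,b,c,d,E,F,G,h,i,j)

/-- `S` acting on coordinates 2,5,8,9 of a 10-tuple. -/
def app2589 (S : Q X → Q X) : P X → P X := fun p =>
  match p with
  | (a,b,c,d,e,f,g,h,i,j) =>
    match S (b,e,h,i) with
    | (B,E,H,I) => (a,B,c,d,E,f,g,H,I,j)

/-- `S` acting on coordinates 3,6,8,10 of a 10-tuple. -/
def app368X (S : Q X → Q X) : P X → P X := fun p =>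
  match p with
  | (a,b,c,d,e,f,g,h,i,j) =>
    match S (c,f,h,j) with
    | (C,F,H,J) => (a,b,C,d,e,F,g,H,i,J)

/-- `S` acting on coordinates 4,7,9,10 of a 10-tuple. -/
def app479X (S : Q X → Q X) : P X → P X := fun p =>
  match p with
  | (a,b,c,d,e,f,g,h,i,j) =>
    match S (d,g,i,j) with
    | (D,G,I,J) => (a,b,c,D,e,f,G,h,I,J)

def proj1234 : P X → Q X := fun p => match p with
  | (a,b,c,d,_,_,_,_,_,_) => (a,b,c,d)

def proj1567 : P X → Q X := fun p => match p with
  | (a,_,_,_,e,f,g,_,_,_) => (a,e,f,g)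

def proj2589 : P X → Q X := fun p => match p with
  | (_,b,_,_,e,_,_,h,i,_) => (b,e,h,i)

def proj368X : P X → Q X := fun p => match p with
  | (_,_,c,_,_,f,_,h,_,j) => (c,f,h,j)

def proj479X : P X → Q X := fun p => match p with
  | (_,_,_,d,_,_,g,_,i,j) => (d,g,i,j)

/-- Left-hand side of the 4-simplex equation. -/
def lhs (S : Q X → Q X) : P X → P X :=
  app1234 S ∘ app1567 S ∘ app2589 S ∘ app368X S ∘ app479X S

/-- Right-hand side of the 4-simplex equation. -/
def rhs (S : Q X → Q X) : P X → P X :=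
  app479X S ∘ app368X S ∘ app2589 S ∘ app1567 S ∘ app1234 S

/-- All denominators occurring on the left-hand side composition are nonzero:
`D` holds at each quadruple to which `S` is applied. -/
def lhsDom (D : Q X → Prop) (S : Q X → Q X) (p : P X) : Prop :=
  D (proj479X p) ∧
  D (proj368X (app479X S p)) ∧
  D (proj2589 (app368X S (app479X S p))) ∧
  D (proj1567 (app2589 S (app368X S (app479X S p)))) ∧
  D (proj1234 (app1567 S (app2589 S (app368X S (app479X S p)))))

/-- All denominators occurring on the right-hand side composition are nonzero. -/
def rhsDom (D : Q X → Prop) (S : Q X → Q X) (p : P X) : Prop :=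
  D (proj1234 p) ∧
  D (proj1567 (app1234 S p)) ∧
  D (proj2589 (app1567 S (app1234 S p))) ∧
  D (proj368X (app2589 S (app1567 S (app1234 S p)))) ∧
  D (proj479X (app368X S (app2589 S (app1567 S (app1234 S p)))))


/-! The NLS type parametric 4-simplex map. -/

abbrev C3 : Type := ℂ × ℂ × ℂ

/-- The NLS type parametric 4-simplex map S_{α,β,γ,δ}. -/
def Snlsp (α β γ δ : ℂ) : Q C3 → Q C3 := fun q =>
  match q with
  | ((x1,x2,x3),(y1,y2,y3),(z1,z2,z3),(t1,t2,t3)) =>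
    (((β*x1 - y1*y3*z2)*z3/(γ*y3),
      (α*γ*(γ*x2*x3 + (z2 + x1*y2)*x2*x3*z1*z3 + α*y2*z1*z3)
        / (α*β*γ - (x2*x3*(x1*y2 + z2) + α*y2)
            * (z1*z3*(β*x1 - y1*y3*z2) - γ*y1*y3)))
        * (y3/(x3*z3)),
      x3),
     (x3*(γ*y1*y3 + (y1*y3*z2 - β*x1)*z1*z3)/(α*γ*y3),
      (x1*y2 + z2)*x2 + α*y2/x3,
      y3),
     (((x2*x3*y1*y3*(γ + z1*z2*z3) - β*z1*z3*(α + x1*x2*x3))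
        / ((x2*x3*(x1*y2 + z2) + α*y2)
            * (z1*z3*(β*x1 - y1*y3*z2) - γ*y1*y3) - α*β*γ))
        * (γ/z3),
      x1*y2 + z2,
      z3),
     (t1*y3/x3, t2*x3/y3, t3))

/-- Nonvanishing of the denominators of `Snlsp α β γ δ`
(the parameter δ does not occur in any denominator). -/
def DomNLSP (α β γ : ℂ) : Q C3 → Prop := fun q =>
  match q with
  | ((x1,x2,x3),(y1,y2,y3),(z1,z2,z3),_) =>
    α ≠ 0 ∧ γ ≠ 0 ∧ x3 ≠ 0 ∧ y3 ≠ 0 ∧ z3 ≠ 0 ∧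
    α*β*γ - (x2*x3*(x1*y2 + z2) + α*y2)
      * (z1*z3*(β*x1 - y1*y3*z2) - γ*y1*y3) ≠ 0

/-!
The factors `x₁x₂ + α/x₃`, `y₁y₂ + β/y₃`, `z₁z₂ + γ/z₃` are rescaled by `S`: the middle one becomes
`Δ/(αγy₃)`, where `Δ` is the common denominator of `S`, and the two outer ones are multiplied by
the inverse of that factor, so the products of neighbouring factors are invariant. Since `S` fixes
`x₃` and `y₃` and rescales `t₁` by `y₃/x₃`, `S ∘ S` rescales `t₁` by `(y₃/x₃)²`. On the `S`-invariant
slice `x₁ = x₂ = z₁ = z₂ = 0` one has `Δ = αγ(β + y₁y₂y₃)` with `y₁y₂y₃` preserved by `S`, which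
gives points where both `S` and `S ∘ S` are defined.
-/

def nlsFactor (a : ℂ) (x : C3) : ℂ := x.1 * x.2.1 + a / x.2.2

def nlspDelta (α β γ : ℂ) : Q C3 → ℂ := fun q =>
  match q with
  | ((x1,x2,x3),(y1,y2,y3),(z1,z2,z3),_) =>
    α*β*γ - (x2*x3*(x1*y2 + z2) + α*y2) * (z1*z3*(β*x1 - y1*y3*z2) - γ*y1*y3)

theorem domNLSP_iff {α β γ : ℂ} {q : Q C3} :
    DomNLSP α β γ q ↔ α ≠ 0 ∧ γ ≠ 0 ∧ q.1.2.2 ≠ 0 ∧ q.2.1.2.2 ≠ 0 ∧ q.2.2.1.2.2 ≠ 0 ∧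
      nlspDelta α β γ q ≠ 0 :=
  Iff.rfl

section Invariants

variable {α β γ : ℂ} (δ : ℂ) {q : Q C3}

theorem nlsFactor_snd_Snlsp (hα : α ≠ 0) (hγ : γ ≠ 0) (hx3 : q.1.2.2 ≠ 0) (hy3 : q.2.1.2.2 ≠ 0) :
    nlsFactor β (Snlsp α β γ δ q).2.1 = nlspDelta α β γ q / (α * γ * q.2.1.2.2) := by
  obtain ⟨⟨x1, x2, x3⟩, ⟨y1, y2, y3⟩, ⟨z1, z2, z3⟩, t⟩ := q
  simp only [nlsFactor, Snlsp, nlspDelta] at *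
  field_simp
  ring

theorem nlsFactor_fst_Snlsp (hγ : γ ≠ 0) (hx3 : q.1.2.2 ≠ 0) (hy3 : q.2.1.2.2 ≠ 0)
    (hz3 : q.2.2.1.2.2 ≠ 0) (hΔ : nlspDelta α β γ q ≠ 0) :
    nlsFactor α (Snlsp α β γ δ q).1 =
      α * γ * q.2.1.2.2 / nlspDelta α β γ q * (nlsFactor α q.1 * nlsFactor β q.2.1) := by
  obtain ⟨⟨x1, x2, x3⟩, ⟨y1, y2, y3⟩, ⟨z1, z2, z3⟩, t⟩ := q
  -- `field_simp` only cancels `Δ` if it is kept atomic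
  generalize hD : nlspDelta α β γ _ = D at hΔ ⊢
  simp only [nlspDelta] at hD
  simp only [nlsFactor, Snlsp] at *
  rw [hD]
  field_simp
  subst hD
  ring

theorem nlsFactor_thd_Snlsp (hx3 : q.1.2.2 ≠ 0) (hy3 : q.2.1.2.2 ≠ 0)
    (hz3 : q.2.2.1.2.2 ≠ 0) (hΔ : nlspDelta α β γ q ≠ 0) :
    nlsFactor γ (Snlsp α β γ δ q).2.2.1 =
      α * γ * q.2.1.2.2 / nlspDelta α β γ q * (nlsFactor β q.2.1 * nlsFactor γ q.2.2.1) := by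
  obtain ⟨⟨x1, x2, x3⟩, ⟨y1, y2, y3⟩, ⟨z1, z2, z3⟩, t⟩ := q
  generalize hD : nlspDelta α β γ _ = D at hΔ ⊢
  simp only [nlspDelta] at hD
  simp only [nlsFactor, Snlsp] at *
  rw [← neg_sub (α * β * γ), hD]
  field_simp
  subst hD
  ring

theorem Snlsp_preserves_I₁ (h : DomNLSP α β γ q) :
    nlsFactor α (Snlsp α β γ δ q).1 * nlsFactor β (Snlsp α β γ δ q).2.1 =
      nlsFactor α q.1 * nlsFactor β q.2.1 := by
  obtain ⟨hα, hγ, hx3, hy3, hz3, hΔ⟩ := domNLSP_iff.1 h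
  rw [nlsFactor_fst_Snlsp δ hγ hx3 hy3 hz3 hΔ, nlsFactor_snd_Snlsp δ hα hγ hx3 hy3]
  field_simp

theorem Snlsp_preserves_I₂ (h : DomNLSP α β γ q) :
    nlsFactor β (Snlsp α β γ δ q).2.1 * nlsFactor γ (Snlsp α β γ δ q).2.2.1 =
      nlsFactor β q.2.1 * nlsFactor γ q.2.2.1 := by
  obtain ⟨hα, hγ, hx3, hy3, hz3, hΔ⟩ := domNLSP_iff.1 h
  rw [nlsFactor_thd_Snlsp δ hx3 hy3 hz3 hΔ, nlsFactor_snd_Snlsp δ hα hγ hx3 hy3]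
  field_simp

theorem Snlsp_preserves_I₆ (hx3 : q.1.2.2 ≠ 0) (hy3 : q.2.1.2.2 ≠ 0) :
    (Snlsp α β γ δ q).2.2.2.1 * (Snlsp α β γ δ q).2.2.2.2.1 = q.2.2.2.1 * q.2.2.2.2.1 := by
  obtain ⟨⟨x1, x2, x3⟩, ⟨y1, y2, y3⟩, ⟨z1, z2, z3⟩, t1, t2, t3⟩ := q
  simp only [Snlsp] at *
  field_simp

theorem Snlsp_Snlsp_t₁ (q : Q C3) :
    (Snlsp α β γ δ (Snlsp α β γ δ q)).2.2.2.1 = q.2.2.2.1 * q.2.1.2.2 ^ 2 / q.1.2.2 ^ 2 := by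
  obtain ⟨⟨x1, x2, x3⟩, ⟨y1, y2, y3⟩, ⟨z1, z2, z3⟩, t1, t2, t3⟩ := q
  simp only [Snlsp]
  ring

end Invariants

theorem nlspDelta_slice (α β γ x3 y1 y2 y3 z3 : ℂ) (t : C3) :
    nlspDelta α β γ ((0, 0, x3), (y1, y2, y3), (0, 0, z3), t) = α * γ * (β + y1 * y2 * y3) := by
  simp only [nlspDelta]
  ring

theorem Snlsp_slice {α β γ δ x3 y1 y2 y3 z3 t1 t2 t3 : ℂ} (hγ : γ ≠ 0) (hy3 : y3 ≠ 0) :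
    Snlsp α β γ δ ((0, 0, x3), (y1, y2, y3), (0, 0, z3), (t1, t2, t3)) =
      ((0, 0, x3), (x3 * y1 / α, α * y2 / x3, y3), (0, 0, z3), (t1 * y3 / x3, t2 * x3 / y3, t3)) := by
  simp only [Snlsp, mul_zero, sub_self, zero_mul, zero_div, add_zero, zero_add, zero_sub, mul_neg,
    sub_neg_eq_add, Prod.mk.injEq, and_true, true_and]
  field_simp

theorem domNLSP_slice_iff {α β γ x3 y1 y2 y3 z3 : ℂ} {t : C3} :
    DomNLSP α β γ ((0, 0, x3), (y1, y2, y3), (0, 0, z3), t) ↔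
      α ≠ 0 ∧ γ ≠ 0 ∧ x3 ≠ 0 ∧ y3 ≠ 0 ∧ z3 ≠ 0 ∧ β + y1 * y2 * y3 ≠ 0 := by
  rw [domNLSP_iff, nlspDelta_slice]
  constructor
  · rintro ⟨hα, hγ, hx3, hy3, hz3, hΔ⟩
    exact ⟨hα, hγ, hx3, hy3, hz3, right_ne_zero_of_mul hΔ⟩
  · rintro ⟨hα, hγ, hx3, hy3, hz3, hβ⟩
    exact ⟨hα, hγ, hx3, hy3, hz3, mul_ne_zero (mul_ne_zero hα hγ) hβ⟩

theorem domNLSP_Snlsp_slice {α β γ x3 y1 y2 y3 z3 t1 t2 t3 : ℂ} (δ : ℂ)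
    (h : DomNLSP α β γ ((0, 0, x3), (y1, y2, y3), (0, 0, z3), (t1, t2, t3))) :
    DomNLSP α β γ (Snlsp α β γ δ ((0, 0, x3), (y1, y2, y3), (0, 0, z3), (t1, t2, t3))) := by
  obtain ⟨hα, hγ, hx3, hy3, hz3, hβ⟩ := domNLSP_slice_iff.1 h
  rw [Snlsp_slice hγ hy3, domNLSP_slice_iff]
  refine ⟨hα, hγ, hx3, hy3, hz3, ?_⟩
  convert hβ using 2
  field_simp

/-- For the NLS type parametric 4-simplex map S_{α,β,γ,δ}, writing
S_{α,β,γ,δ}(x₁,x₂,x₃,y₁,y₂,y₃,z₁,z₂,z₃,t₁,t₂,t₃) = (u₁,u₂,u₃,v₁,v₂,v₃,w₁,w₂,w₃,r₁,r₂,r₃),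
at every point where all denominators are nonzero one has
(u₁u₂ + α/u₃)(v₁v₂ + β/v₃) = (x₁x₂ + α/x₃)(y₁y₂ + β/y₃),
(v₁v₂ + β/v₃)(w₁w₂ + γ/w₃) = (y₁y₂ + β/y₃)(z₁z₂ + γ/z₃),
u₃ = x₃, v₃ = y₃, w₃ = z₃ and r₁r₂ = t₁t₂, so that I₁,…,I₆ are invariants.
Moreover S_{α,β,γ,δ} is noninvolutive: there exists a point p, with all denominators
nonzero, such that S_{α,β,γ,δ}(S_{α,β,γ,δ}(p)) ≠ p. -/
theorem Snlsp_invariants_and_noninvolutive (α β γ δ : ℂ) :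
    (∀ x1 x2 x3 y1 y2 y3 z1 z2 z3 t1 t2 t3 : ℂ,
      DomNLSP α β γ ((x1,x2,x3),(y1,y2,y3),(z1,z2,z3),(t1,t2,t3)) →
      match Snlsp α β γ δ ((x1,x2,x3),(y1,y2,y3),(z1,z2,z3),(t1,t2,t3)) with
      | ((u1,u2,u3),(v1,v2,v3),(w1,w2,w3),(r1,r2,_)) =>
        (u1*u2 + α/u3)*(v1*v2 + β/v3) = (x1*x2 + α/x3)*(y1*y2 + β/y3) ∧
        (v1*v2 + β/v3)*(w1*w2 + γ/w3) = (y1*y2 + β/y3)*(z1*z2 + γ/z3) ∧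
        u3 = x3 ∧ v3 = y3 ∧ w3 = z3 ∧ r1*r2 = t1*t2) ∧
    (α ≠ 0 → γ ≠ 0 →
      ∃ p : Q C3, DomNLSP α β γ p ∧ DomNLSP α β γ (Snlsp α β γ δ p) ∧
        Snlsp α β γ δ (Snlsp α β γ δ p) ≠ p) := by
  refine ⟨fun x1 x2 x3 y1 y2 y3 z1 z2 z3 t1 t2 t3 h => ?_, fun hα hγ => ?_⟩
  · have h1 := Snlsp_preserves_I₁ δ h
    have h2 := Snlsp_preserves_I₂ δ h
    have h6 := Snlsp_preserves_I₆ (α := α) (β := β) (γ := γ) δ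
      (q := ((x1, x2, x3), (y1, y2, y3), (z1, z2, z3), (t1, t2, t3))) h.2.2.1 h.2.2.2.1
    simp only [nlsFactor] at h1 h2
    exact ⟨h1, h2, rfl, rfl, rfl, h6⟩
  · have hβ : β + (1 - β) * 1 * 1 ≠ 0 := by ring_nf; exact one_ne_zero
    have hp : DomNLSP α β γ ((0, 0, 2), (1 - β, 1, 1), (0, 0, 1), (1, 1, 1)) :=
      domNLSP_slice_iff.2 ⟨hα, hγ, two_ne_zero, one_ne_zero, one_ne_zero, hβ⟩
    refine ⟨_, hp, domNLSP_Snlsp_slice δ hp, fun h => ?_⟩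
    have h10 := congrArg (fun p : Q C3 => p.2.2.2.1) h
    simp only [Snlsp_Snlsp_t₁] at h10
    norm_num at h10

end Paper4Simplex
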